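/- (Theorem 2.1, continuous dependence, global case.) Let Λ be a metric space, λ₀ ∈ Λ, and F : C([a,b],E) × Λ → C([a,b],E) be such that F(·,λ) is a Volterra operator for each λ ∈ Λ. Assume: (1) there is a neighborhood U₀ of λ₀ on which the family {F(·,λ)}_{λ∈U₀} is uniformly locally contracting with constant q < 1; (2) for every y ∈ C([a,b],E), the map F is continuous at (y, λ₀). If the equation y = F(y,λ₀) has a global solution y₀ ∈ C([a,b],E), then there is a neighborhood U of λ₀ such that for every λ ∈ U the equation y = F(y,λ) has a global solution y(λ) ∈ C([a,b],E), and ‖y(λ) − y₀‖_{C([a,b],E)} → 0 as λ → λ₀. -/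
import Mathlib


open Set Filter Topology

set_option linter.unusedSectionVars false

noncomputable section

variable {E : Type*} [NormedAddCommGroup E] [NormedSpace ℝ E] [CompleteSpace E]

/-- The partial sup-norm `‖y‖_ξ = sup_{t ∈ [a, a+ξ]} ‖y t‖` on `C([a,b], E)`. -/
def partNorm (a b ξ : ℝ) (y : C(Set.Icc a b, E)) : ℝ :=
  sSup ((fun t : Set.Icc a b => ‖y t‖) '' {t : Set.Icc a b | (t : ℝ) ≤ a + ξ})

/-- `y₁` and `y₂` agree on `[a, a+ξ]`. -/
def eqUpTo (a b ξ : ℝ) (y₁ y₂ : C(Set.Icc a b, E)) : Prop :=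
  ∀ t : Set.Icc a b, (t : ℝ) ≤ a + ξ → y₁ t = y₂ t

/-- A Volterra operator on `C([a,b], E)` (in the sense of Tikhonov). -/
def IsVolterra (a b : ℝ) (Ψ : C(Set.Icc a b, E) → C(Set.Icc a b, E)) : Prop :=
  ∀ ξ ∈ Set.Ioo (0:ℝ) (b - a), ∀ y₁ y₂ : C(Set.Icc a b, E),
    eqUpTo a b ξ y₁ y₂ → eqUpTo a b ξ (Ψ y₁) (Ψ y₂)

/-- A locally contracting operator with contraction constant `q`. -/
def IsLocallyContracting (a b q : ℝ) (Ψ : C(Set.Icc a b, E) → C(Set.Icc a b, E)) : Prop :=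
  ∀ r > (0:ℝ), ∃ δ > (0:ℝ), ∀ y₁ y₂ : C(Set.Icc a b, E),
    partNorm a b (b - a) y₁ ≤ r → partNorm a b (b - a) y₂ ≤ r →
      (partNorm a b δ (Ψ y₁ - Ψ y₂) ≤ q * partNorm a b δ (y₁ - y₂)) ∧
      (∀ γ ∈ Set.Ioc (0:ℝ) (b - a - δ), eqUpTo a b γ y₁ y₂ →
        partNorm a b (γ + δ) (Ψ y₁ - Ψ y₂) ≤ q * partNorm a b (γ + δ) (y₁ - y₂))

/-- A local solution of `y = Ψ y` on `[a, a+γ]`: a function continuous on `[a, a+γ]`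
admitting a continuous extension `y ∈ C([a,b], E)` with `(Ψ y) t = g t` on `[a, a+γ]`. -/
def IsLocalSolution (a b γ : ℝ) (Ψ : C(Set.Icc a b, E) → C(Set.Icc a b, E))
    (g : ℝ → E) : Prop :=
  0 < γ ∧ γ ≤ b - a ∧ ContinuousOn g (Set.Icc a (a + γ)) ∧
  ∃ y : C(Set.Icc a b, E),
    (∀ t : Set.Icc a b, (t : ℝ) ≤ a + γ → y t = g t) ∧
    (∀ t : Set.Icc a b, (t : ℝ) ≤ a + γ → Ψ y t = g t)

/-- A maximally extended solution of `y = Ψ y` on `[a, a+ζ)`. -/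
def IsMaxExtSolution (a b ζ : ℝ) (Ψ : C(Set.Icc a b, E) → C(Set.Icc a b, E))
    (g : ℝ → E) : Prop :=
  0 < ζ ∧ ζ ≤ b - a ∧ (∀ γ ∈ Set.Ioo (0:ℝ) ζ, IsLocalSolution a b γ Ψ g) ∧
  Tendsto (fun γ => sSup ((fun t => ‖g t‖) '' Set.Icc a (a + γ))) (𝓝[<] ζ) atTop

/-- A family of Volterra operators, uniformly locally contracting on `Λ₀` with constant `q`. -/
def IsUniformlyLocallyContracting {Λ : Type*} (a b q : ℝ) (Λ₀ : Set Λ)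
    (F : C(Set.Icc a b, E) → Λ → C(Set.Icc a b, E)) : Prop :=
  ∀ r > (0:ℝ), ∃ δ > (0:ℝ), ∀ lam ∈ Λ₀, ∀ y₁ y₂ : C(Set.Icc a b, E),
    partNorm a b (b - a) y₁ ≤ r → partNorm a b (b - a) y₂ ≤ r →
      (partNorm a b δ (F y₁ lam - F y₂ lam) ≤ q * partNorm a b δ (y₁ - y₂)) ∧
      (∀ γ ∈ Set.Ioc (0:ℝ) (b - a - δ), eqUpTo a b γ y₁ y₂ →
        partNorm a b (γ + δ) (F y₁ lam - F y₂ lam) ≤ q * partNorm a b (γ + δ) (y₁ - y₂))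

namespace VolterraProofAux

variable {a b : ℝ}

lemma partNorm_nonneg (a b ξ : ℝ) (y : C(Set.Icc a b, E)) : 0 ≤ partNorm a b ξ y :=
  Real.sSup_nonneg (by rintro x ⟨t, _, rfl⟩; exact norm_nonneg _)

lemma partNorm_le {ξ c : ℝ} (hc : 0 ≤ c) {y : C(Set.Icc a b, E)}
    (h : ∀ t : Set.Icc a b, (t : ℝ) ≤ a + ξ → ‖y t‖ ≤ c) : partNorm a b ξ y ≤ c :=
  Real.sSup_le (by rintro x ⟨t, ht, rfl⟩; exact h t ht) hc

lemma le_partNorm {ξ : ℝ} {y : C(Set.Icc a b, E)} (t : Set.Icc a b) (ht : (t : ℝ) ≤ a + ξ) :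
    ‖y t‖ ≤ partNorm a b ξ y :=
  le_csSup ⟨‖y‖, by rintro x ⟨s, _, rfl⟩; exact y.norm_coe_le_norm s⟩ ⟨t, ht, rfl⟩

lemma partNorm_le_norm (a b ξ : ℝ) (y : C(Set.Icc a b, E)) : partNorm a b ξ y ≤ ‖y‖ :=
  partNorm_le (norm_nonneg y) fun t _ => y.norm_coe_le_norm t

lemma partNorm_mono {ξ₁ ξ₂ : ℝ} (h : ξ₁ ≤ ξ₂) (y : C(Set.Icc a b, E)) :
    partNorm a b ξ₁ y ≤ partNorm a b ξ₂ y :=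
  partNorm_le (partNorm_nonneg _ _ _ _) fun t ht => le_partNorm t (by linarith)

lemma partNorm_eq_min (a b ξ : ℝ) (y : C(Set.Icc a b, E)) :
    partNorm a b ξ y = partNorm a b (min ξ (b - a)) y := by
  have hset : {t : Set.Icc a b | (t : ℝ) ≤ a + ξ}
      = {t : Set.Icc a b | (t : ℝ) ≤ a + min ξ (b - a)} := by
    ext t
    have h2 := t.2.2
    simp only [mem_setOf_eq]
    rcases le_total ξ (b - a) with h' | h'
    · rw [min_eq_left h']
    · rw [min_eq_right h']
      constructor <;> intro h <;> linarith
  unfold partNorm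
  rw [hset]

lemma partNorm_add_le (a b ξ : ℝ) (y z : C(Set.Icc a b, E)) :
    partNorm a b ξ (y + z) ≤ partNorm a b ξ y + partNorm a b ξ z :=
  partNorm_le (add_nonneg (partNorm_nonneg _ _ _ _) (partNorm_nonneg _ _ _ _)) fun t ht => by
    rw [ContinuousMap.add_apply]
    exact (norm_add_le _ _).trans (add_le_add (le_partNorm t ht) (le_partNorm t ht))

def stopAt (a b : ℝ) (s : Set.Icc a b) (y : C(Set.Icc a b, E)) : C(Set.Icc a b, E) :=
  y.comp ⟨fun t => ⟨min (t : ℝ) (s : ℝ), ⟨le_min t.2.1 s.2.1, (min_le_left _ _).trans t.2.2⟩⟩,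
    (continuous_subtype_val.min continuous_const).subtype_mk _⟩

lemma stopAt_apply (s : Set.Icc a b) (y : C(Set.Icc a b, E)) (t : Set.Icc a b) :
    stopAt a b s y t
      = y ⟨min (t : ℝ) (s : ℝ), ⟨le_min t.2.1 s.2.1, (min_le_left _ _).trans t.2.2⟩⟩ := rfl

lemma stopAt_apply_of_le {s : Set.Icc a b} {t : Set.Icc a b} (y : C(Set.Icc a b, E))
    (h : (t : ℝ) ≤ (s : ℝ)) : stopAt a b s y t = y t := by
  rw [stopAt_apply]
  congr 1
  exact Subtype.ext (min_eq_left h)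

lemma stopAt_sub (s : Set.Icc a b) (y z : C(Set.Icc a b, E)) :
    stopAt a b s y - stopAt a b s z = stopAt a b s (y - z) := by
  ext t
  simp [stopAt_apply, ContinuousMap.sub_apply]

lemma stopAt_add (s : Set.Icc a b) (y z : C(Set.Icc a b, E)) :
    stopAt a b s (y + z) = stopAt a b s y + stopAt a b s z := by
  ext t
  simp [stopAt_apply, ContinuousMap.add_apply]

lemma norm_stopAt_le {ξ : ℝ} {s : Set.Icc a b} (h : (s : ℝ) ≤ a + ξ) (y : C(Set.Icc a b, E)) :
    ‖stopAt a b s y‖ ≤ partNorm a b ξ y :=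
  (ContinuousMap.norm_le _ (partNorm_nonneg _ _ _ _)).mpr fun t => by
    rw [stopAt_apply]
    exact le_partNorm _ ((min_le_right _ _).trans h)

lemma norm_stopAt_le_norm (s : Set.Icc a b) (y : C(Set.Icc a b, E)) :
    ‖stopAt a b s y‖ ≤ ‖y‖ :=
  (ContinuousMap.norm_le _ (norm_nonneg _)).mpr fun t => by
    rw [stopAt_apply]; exact y.norm_coe_le_norm _

lemma stopAt_idem (s : Set.Icc a b) (y : C(Set.Icc a b, E)) :
    stopAt a b s (stopAt a b s y) = stopAt a b s y := by
  ext t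
  simp only [stopAt_apply]
  congr 1
  exact Subtype.ext (by simp [min_assoc])

lemma stopAt_eq_self_of {s₁ s₂ : Set.Icc a b} {y : C(Set.Icc a b, E)}
    (hstop : stopAt a b s₁ y = y) (h : (s₁ : ℝ) ≤ (s₂ : ℝ)) : stopAt a b s₂ y = y := by
  ext t
  conv_lhs => rw [← hstop]
  conv_rhs => rw [← hstop]
  simp only [stopAt_apply]
  congr 1
  exact Subtype.ext (by simp only; rw [min_assoc, min_eq_right h])

lemma lipschitz_stopAt (s : Set.Icc a b) :
    LipschitzWith 1 (stopAt a b s (E := E)) :=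
  LipschitzWith.of_dist_le_mul fun y z => by
    rw [NNReal.coe_one, one_mul, dist_eq_norm, dist_eq_norm, stopAt_sub]
    exact norm_stopAt_le_norm s (y - z)

end VolterraProofAux

open VolterraProofAux

set_option maxHeartbeats 4000000 in
/-- Theorem 2.1, continuous dependence on the parameter: global case. -/
theorem global_solution_continuous_dependence
    {Λ : Type*} [MetricSpace Λ] (lam₀ : Λ)
    (a b q : ℝ) (hab : a < b) (hq : q < 1)
    (F : C(Set.Icc a b, E) → Λ → C(Set.Icc a b, E))
    (hVol : ∀ lam : Λ, IsVolterra a b (fun y => F y lam))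
    (U₀ : Set Λ) (hU₀ : U₀ ∈ 𝓝 lam₀)
    (hULC : IsUniformlyLocallyContracting a b q U₀ F)
    (hcont : ∀ y : C(Set.Icc a b, E),
      ContinuousAt (fun p : C(Set.Icc a b, E) × Λ => F p.1 p.2) (y, lam₀))
    (y₀ : C(Set.Icc a b, E)) (hy₀ : F y₀ lam₀ = y₀) :
    ∃ U ∈ 𝓝 lam₀, ∃ sol : Λ → C(Set.Icc a b, E),
      (∀ lam ∈ U, F (sol lam) lam = sol lam) ∧
      Tendsto (fun lam => ‖sol lam - y₀‖) (𝓝 lam₀) (𝓝 0) := by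
  classical
  set r : ℝ := ‖y₀‖ + 1 with hrdef
  have hrpos : 0 < r := by positivity
  obtain ⟨δ, hδpos, hF⟩ := hULC r hrpos
  set Q : ℝ := max q 0 with hQdef
  have hQ0 : 0 ≤ Q := le_max_right q 0
  have hQ1 : Q < 1 := max_lt hq one_pos
  have hab' : a ≤ b := hab.le
  have hτmem : ∀ k : ℕ, min (a + (k : ℝ) * δ) b ∈ Set.Icc a b := fun k =>
    ⟨le_min (le_add_of_nonneg_right (mul_nonneg (Nat.cast_nonneg k) hδpos.le)) hab',
      min_le_right _ _⟩
  set τ : ℕ → Set.Icc a b := fun k => ⟨min (a + (k : ℝ) * δ) b, hτmem k⟩ with hτdef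
  have hτval : ∀ k : ℕ, ((τ k : Set.Icc a b) : ℝ) = min (a + (k : ℝ) * δ) b := fun _ => rfl
  have hminadd : ∀ x : ℝ, min (a + x) b = a + min x (b - a) := by
    intro x
    rcases le_total x (b - a) with h | h
    · rw [min_eq_left (by linarith), min_eq_left h]
    · rw [min_eq_right (by linarith), min_eq_right h]; ring
  have hτmono : ∀ k : ℕ, ((τ k : Set.Icc a b) : ℝ) ≤ ((τ (k+1) : Set.Icc a b) : ℝ) := by
    intro k
    rw [hτval, hτval]
    refine min_le_min ?_ le_rfl
    push_cast
    nlinarith [hδpos.le]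
  have hr_of : ∀ y : C(Set.Icc a b, E), ‖y‖ ≤ r → partNorm a b (b - a) y ≤ r :=
    fun y hy => (partNorm_le_norm a b _ y).trans hy
  -- the combined contraction estimate for a single step
  have contr_est : ∀ lam ∈ U₀, ∀ k : ℕ, a + (k : ℝ) * δ < b →
      ∀ y₁ y₂ : C(Set.Icc a b, E), ‖y₁‖ ≤ r → ‖y₂‖ ≤ r →
      (1 ≤ k → ∀ t : Set.Icc a b, (t : ℝ) ≤ ((τ k : Set.Icc a b) : ℝ) → y₁ t = y₂ t) →
      partNorm a b (min (((k : ℝ) + 1) * δ) (b - a)) (F y₁ lam - F y₂ lam) ≤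
        Q * partNorm a b (min (((k : ℝ) + 1) * δ) (b - a)) (y₁ - y₂) := by
    intro lam hlam k hk y₁ y₂ h₁ h₂ hagree
    rcases Nat.eq_zero_or_pos k with rfl | hk1
    · have h := (hF lam hlam y₁ y₂ (hr_of _ h₁) (hr_of _ h₂)).1
      have hle : partNorm a b δ (F y₁ lam - F y₂ lam) ≤ Q * partNorm a b δ (y₁ - y₂) :=
        h.trans (mul_le_mul_of_nonneg_right (le_max_left q 0) (partNorm_nonneg _ _ _ _))
      simp only [Nat.cast_zero, zero_add, one_mul]
      rw [← partNorm_eq_min, ← partNorm_eq_min]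
      exact hle
    · have hk1' : (1 : ℝ) ≤ (k : ℝ) := by exact_mod_cast hk1
      have hδba : δ < b - a := by nlinarith
      set γ : ℝ := min ((k : ℝ) * δ) (b - a - δ) with hγdef
      have hγpos : 0 < γ := lt_min (by nlinarith) (by linarith)
      have hτk : ((τ k : Set.Icc a b) : ℝ) = a + (k : ℝ) * δ := by
        rw [hτval]; exact min_eq_left hk.le
      have hagree' : eqUpTo a b γ y₁ y₂ := by
        intro t ht
        refine hagree hk1 t ?_
        rw [hτk]
        have := min_le_left ((k : ℝ) * δ) (b - a - δ)
        linarith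
      have h := (hF lam hlam y₁ y₂ (hr_of _ h₁) (hr_of _ h₂)).2 γ
        ⟨hγpos, min_le_right _ _⟩ hagree'
      have hsum : γ + δ = min (((k : ℝ) + 1) * δ) (b - a) := by
        rw [hγdef, ← min_add_add_right]
        congr 1 <;> ring
      rw [← hsum]
      exact h.trans (mul_le_mul_of_nonneg_right (le_max_left q 0) (partNorm_nonneg _ _ _ _))
  have hshrink : ∀ ξ : ℝ, ∀ v : C(Set.Icc a b, E),
      partNorm a b ξ v ≤ Q * partNorm a b ξ v →
      ∀ t : Set.Icc a b, (t : ℝ) ≤ a + ξ → v t = 0 := by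
    intro ξ v hv t ht
    have hnn := partNorm_nonneg a b ξ v
    have h0 : partNorm a b ξ v ≤ 0 := by nlinarith
    have h1 : ‖v t‖ ≤ 0 := (le_partNorm t ht).trans h0
    exact norm_le_zero_iff.mp h1
  -- uniqueness of fixed points of norm at most r
  have uniq : ∀ lam ∈ U₀, ∀ u v : C(Set.Icc a b, E), F u lam = u → F v lam = v →
      ‖u‖ ≤ r → ‖v‖ ≤ r → u = v := by
    intro lam hlam u v hu hv hru hrv
    have main : ∀ k : ℕ, ∀ t : Set.Icc a b,
        (t : ℝ) ≤ a + min (((k : ℝ) + 1) * δ) (b - a) → u t = v t := by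
      intro k
      induction k with
      | zero =>
        intro t ht
        have h := contr_est lam hlam 0 (by simpa using hab) u v hru hrv
          (fun h => absurd h (by omega))
        rw [hu, hv] at h
        have h2 := hshrink _ (u - v) h t ht
        rwa [ContinuousMap.sub_apply, sub_eq_zero] at h2
      | succ k ih =>
        intro t ht
        by_cases hk : a + ((k : ℝ) + 1) * δ < b
        · have hag : 1 ≤ k + 1 → ∀ s : Set.Icc a b,
              (s : ℝ) ≤ ((τ (k+1) : Set.Icc a b) : ℝ) → u s = v s := by
            intro _ s hs
            apply ih s
            rw [hτval] at hs
            push_cast at hs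
            rcases le_total (((k : ℝ) + 1) * δ) (b - a) with h' | h'
            · rw [min_eq_left h']
              exact hs.trans (min_le_left _ _)
            · rw [min_eq_right h']
              have := s.2.2; linarith
          have h := contr_est lam hlam (k+1) (by push_cast; exact hk) u v hru hrv hag
          rw [hu, hv] at h
          have h2 := hshrink _ (u - v) h t ht
          rwa [ContinuousMap.sub_apply, sub_eq_zero] at h2
        · apply ih t
          push_neg at hk
          have hba : b - a ≤ ((k : ℝ) + 1) * δ := by linarith
          rw [min_eq_right hba]
          have h2 := t.2.2
          linarith
    ext t
    have hmle : b - a ≤ ((⌈(b - a) / δ⌉₊ : ℝ) + 1) * δ := by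
      have h1 := Nat.le_ceil ((b - a) / δ)
      rw [div_le_iff₀ hδpos] at h1
      nlinarith [hδpos.le]
    exact main ⌈(b - a) / δ⌉₊ t (by rw [min_eq_right hmle]; have := t.2.2; linarith)
  -- the inductive construction of approximate (prefix) solutions
  have Pmain : ∀ k : ℕ, ∀ ε > (0:ℝ), ∀ᶠ lam in 𝓝 lam₀, lam ∈ U₀ ∧
      ∃ u : C(Set.Icc a b, E), stopAt a b (τ k) u = u ∧
        (1 ≤ k → ∀ t : Set.Icc a b, (t : ℝ) ≤ ((τ k : Set.Icc a b) : ℝ) → F u lam t = u t) ∧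
        ‖u - stopAt a b (τ k) y₀‖ ≤ ε := by
    intro k
    induction k with
    | zero =>
      intro ε hε
      filter_upwards [hU₀] with lam hlam
      exact ⟨hlam, stopAt a b (τ 0) y₀, stopAt_idem _ _, fun h => absurd h (by omega),
        by simp only [sub_self, norm_zero]; exact hε.le⟩
    | succ k ih =>
      intro ε hε
      by_cases hk : a + (k : ℝ) * δ < b
      · -- a real step
        set t₀ : ℝ := min (ε * (1 - Q) / 2) ((1 - Q) / 2) with ht₀def
        have ht₀pos : 0 < t₀ := lt_min (by nlinarith) (by linarith)
        have ht₀a : t₀ ≤ ε * (1 - Q) / 2 := min_le_left _ _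
        have ht₀b : t₀ ≤ (1 - Q) / 2 := min_le_right _ _
        obtain ⟨σ, hσpos, V, hV, hcball⟩ : ∃ σ > (0:ℝ), ∃ V ∈ 𝓝 lam₀,
            ∀ z : C(Set.Icc a b, E), ‖z - y₀‖ ≤ σ → ∀ lam ∈ V, ‖F z lam - y₀‖ ≤ t₀ := by
          have hc : Tendsto (fun p : C(Set.Icc a b, E) × Λ => F p.1 p.2)
              (𝓝 (y₀, lam₀)) (𝓝 y₀) := by
            have h := hcont y₀
            rwa [ContinuousAt, hy₀] at h
          have hmem : {w : C(Set.Icc a b, E) | ‖w - y₀‖ ≤ t₀} ∈ 𝓝 y₀ := by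
            have h1 : Metric.closedBall y₀ t₀ ∈ 𝓝 y₀ := Metric.closedBall_mem_nhds _ ht₀pos
            have h2 : Metric.closedBall y₀ t₀ = {w : C(Set.Icc a b, E) | ‖w - y₀‖ ≤ t₀} := by
              ext w; simp [Metric.mem_closedBall, dist_eq_norm]
            rwa [h2] at h1
          have hpre := hc hmem
          obtain ⟨sW, hsW, tV, htV, hsub⟩ := mem_nhds_prod_iff.mp hpre
          obtain ⟨ρ, hρpos, hρsub⟩ := Metric.mem_nhds_iff.mp hsW
          refine ⟨ρ/2, by linarith, tV, htV, fun z hz lam hlam => ?_⟩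
          have hzs : z ∈ sW := hρsub (by rw [Metric.mem_ball, dist_eq_norm]; linarith)
          exact hsub (Set.mk_mem_prod hzs hlam)
        set εk : ℝ := min σ (min ((1 - Q) / 2) (ε * (1 - Q) / 2)) with hεkdef
        have hεkpos : 0 < εk := lt_min hσpos (lt_min (by linarith) (by nlinarith))
        have hεkσ : εk ≤ σ := min_le_left _ _
        have hεkQ : εk ≤ (1 - Q) / 2 := (min_le_right _ _).trans (min_le_left _ _)
        have hεkε : εk ≤ ε * (1 - Q) / 2 := (min_le_right _ _).trans (min_le_right _ _)
        have hεk1 : εk ≤ 1 := hεkQ.trans (by linarith)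
        filter_upwards [ih εk hεkpos, hV] with lam hih hlamV
        obtain ⟨hlamU, u, hustop, hufix, huη⟩ := hih
        refine ⟨hlamU, ?_⟩
        set τk : Set.Icc a b := τ k with hτkdef
        set τ' : Set.Icc a b := τ (k+1) with hτ'def
        set ck : C(Set.Icc a b, E) := stopAt a b τk y₀ with hckdef
        set c' : C(Set.Icc a b, E) := stopAt a b τ' y₀ with hc'def
        set z : C(Set.Icc a b, E) := y₀ + (u - ck) with hzdef
        set s : ℝ := min (((k : ℝ) + 1) * δ) (b - a) with hsdef
        have hτkval : ((τk : Set.Icc a b) : ℝ) = a + (k : ℝ) * δ := by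
          rw [hτkdef, hτval]
          exact min_eq_left hk.le
        have hτ'val : ((τ' : Set.Icc a b) : ℝ) = a + s := by
          rw [hτ'def, hτval, hsdef]
          push_cast
          exact hminadd _
        have hτkτ' : ((τk : Set.Icc a b) : ℝ) ≤ ((τ' : Set.Icc a b) : ℝ) := hτmono k
        have hck_stop : stopAt a b τ' ck = ck := stopAt_eq_self_of (stopAt_idem _ _) hτkτ'
        have hc'_stop : stopAt a b τ' c' = c' := stopAt_idem _ _
        have hzy₀ : z - y₀ = u - ck := by rw [hzdef]; abel
        have hzball : ‖z - y₀‖ ≤ εk := by rw [hzy₀]; exact huη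
        have hη1 : ‖u - ck‖ ≤ εk := huη
        have hτ'c' : ∀ t : Set.Icc a b, (t : ℝ) ≤ (τ' : ℝ) → c' t = y₀ t :=
          fun t ht => stopAt_apply_of_le y₀ ht
        have hckt : ∀ t : Set.Icc a b, (t : ℝ) ≤ (τk : ℝ) → ck t = y₀ t :=
          fun t ht => stopAt_apply_of_le y₀ ht
        have hnormc' : ‖c'‖ ≤ ‖y₀‖ := norm_stopAt_le_norm _ _
        -- the invariant set
        set K : Set C(Set.Icc a b, E) :=
          {y | stopAt a b τ' y = y ∧
               (1 ≤ k → ∀ t : Set.Icc a b, (t : ℝ) ≤ (τk : ℝ) → y t = u t) ∧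
               ‖y - c'‖ ≤ 1} with hKdef
        -- the key estimate
        have est : ∀ y : C(Set.Icc a b, E),
            (1 ≤ k → ∀ t : Set.Icc a b, (t : ℝ) ≤ (τk : ℝ) → y t = u t) → ‖y - c'‖ ≤ 1 →
            ‖stopAt a b τ' (F y lam) - c'‖ ≤ Q * (‖y - c'‖ + ‖u - ck‖) + t₀ := by
          intro y hyagree hyball
          have hynorm : ‖y‖ ≤ r := by
            have h1 : ‖y‖ ≤ ‖y - c'‖ + ‖c'‖ := by
              simpa using norm_add_le (y - c') c'
            rw [hrdef]; linarith
          have hznorm : ‖z‖ ≤ r := by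
            have h1 : ‖z‖ ≤ ‖z - y₀‖ + ‖y₀‖ := by simpa using norm_add_le (z - y₀) y₀
            rw [hrdef]; linarith [hzball, hεk1]
          have hyz : 1 ≤ k → ∀ t : Set.Icc a b, (t : ℝ) ≤ (τk : ℝ) → y t = z t := by
            intro hk1 t ht
            have h1 : z t = u t := by
              rw [hzdef]
              simp only [ContinuousMap.add_apply, ContinuousMap.sub_apply]
              rw [hckt t ht]; abel
            rw [h1]; exact hyagree hk1 t ht
          have hstep := contr_est lam hlamU k hk y z hynorm hznorm hyz
          rw [← hsdef] at hstep
          have e1 : stopAt a b τ' (F y lam) - c' = stopAt a b τ' (F y lam - y₀) := by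
            rw [hc'def, stopAt_sub]
          have e2 : ‖stopAt a b τ' (F y lam - y₀)‖ ≤ partNorm a b s (F y lam - y₀) :=
            norm_stopAt_le (le_of_eq hτ'val) _
          have e3 : partNorm a b s (F y lam - y₀)
              ≤ partNorm a b s (F y lam - F z lam) + partNorm a b s (F z lam - y₀) := by
            have h1 : F y lam - y₀ = (F y lam - F z lam) + (F z lam - y₀) := by abel
            rw [h1]; exact partNorm_add_le _ _ _ _ _
          have e4 : partNorm a b s (y - z) ≤ ‖y - c'‖ + ‖u - ck‖ := by
            refine partNorm_le (by positivity) fun t ht => ?_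
            have htτ' : (t : ℝ) ≤ (τ' : ℝ) := by rw [hτ'val]; exact ht
            have hcv : c' t = y₀ t := hτ'c' t htτ'
            have e : (y - z) t = (y - c') t - (u - ck) t := by
              simp only [ContinuousMap.sub_apply, ContinuousMap.add_apply, hzdef, hcv]
              abel
            rw [e]
            exact (norm_sub_le _ _).trans
              (add_le_add ((y - c').norm_coe_le_norm t) ((u - ck).norm_coe_le_norm t))
          have e5 : partNorm a b s (F z lam - y₀) ≤ t₀ :=
            (partNorm_le_norm _ _ _ _).trans (hcball z (hzball.trans hεkσ) lam hlamV)
          calc ‖stopAt a b τ' (F y lam) - c'‖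
              = ‖stopAt a b τ' (F y lam - y₀)‖ := by rw [e1]
            _ ≤ partNorm a b s (F y lam - y₀) := e2
            _ ≤ partNorm a b s (F y lam - F z lam) + partNorm a b s (F z lam - y₀) := e3
            _ ≤ Q * partNorm a b s (y - z) + t₀ := add_le_add hstep e5
            _ ≤ Q * (‖y - c'‖ + ‖u - ck‖) + t₀ := by
                have h1 := mul_le_mul_of_nonneg_left e4 hQ0
                linarith
        -- Φ maps K into itself
        have hΦmem : ∀ y ∈ K, stopAt a b τ' (F y lam) ∈ K := by
          intro y hy
          obtain ⟨hystop, hyagree, hyball⟩ := hy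
          refine ⟨stopAt_idem _ _, ?_, ?_⟩
          · intro hk1 t ht
            have htτ' : (t : ℝ) ≤ (τ' : ℝ) := ht.trans hτkτ'
            rw [stopAt_apply_of_le _ htτ']
            have hag : eqUpTo a b ((k : ℝ) * δ) y u := fun sp hsp =>
              hyagree hk1 sp (by rw [hτkval]; exact hsp)
            have hvolt := hVol lam ((k : ℝ) * δ)
              ⟨mul_pos (by exact_mod_cast hk1) hδpos, by linarith⟩ y u hag t
              (by rw [hτkval] at ht; exact ht)
            exact hvolt.trans (hufix hk1 t ht)
          · have h := est y hyagree hyball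
            have h2 : ‖y - c'‖ + ‖u - ck‖ ≤ 1 + (1 - Q) / 2 :=
              add_le_add hyball (hη1.trans hεkQ)
            have h3 := mul_le_mul_of_nonneg_left h2 hQ0
            nlinarith [sq_nonneg (1 - Q)]
        -- K is closed and nonempty
        have hK1 : IsClosed {y : C(Set.Icc a b, E) | stopAt a b τ' y = y} :=
          isClosed_eq (lipschitz_stopAt τ').continuous continuous_id
        have hK2 : IsClosed {y : C(Set.Icc a b, E) |
            1 ≤ k → ∀ t : Set.Icc a b, (t : ℝ) ≤ (τk : ℝ) → y t = u t} := by
          have he : {y : C(Set.Icc a b, E) |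
              1 ≤ k → ∀ t : Set.Icc a b, (t : ℝ) ≤ (τk : ℝ) → y t = u t}
              = ⋂ (_ : 1 ≤ k), ⋂ (t : Set.Icc a b), ⋂ (_ : (t : ℝ) ≤ (τk : ℝ)),
                  {y : C(Set.Icc a b, E) | y t = u t} := by
            ext y; simp only [mem_setOf_eq, mem_iInter]
          rw [he]
          exact isClosed_iInter fun _ => isClosed_iInter fun t => isClosed_iInter fun _ =>
            isClosed_eq (continuous_eval_const t) continuous_const
        have hK3 : IsClosed {y : C(Set.Icc a b, E) | ‖y - c'‖ ≤ 1} :=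
          isClosed_le ((continuous_id.sub continuous_const).norm) continuous_const
        have hKclosed : IsClosed K := by
          rw [hKdef, setOf_and, setOf_and]
          exact hK1.inter (hK2.inter hK3)
        have hwK : u + (c' - ck) ∈ K := by
          refine ⟨?_, ?_, ?_⟩
          · rw [stopAt_add, ← stopAt_sub]
            rw [stopAt_eq_self_of hustop hτkτ', hc'_stop, hck_stop]
          · intro hk1 t ht
            simp only [ContinuousMap.add_apply, ContinuousMap.sub_apply]
            rw [hτ'c' t (ht.trans hτkτ'), hckt t ht]
            abel
          · have e : u + (c' - ck) - c' = u - ck := by abel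
            rw [e]
            exact huη.trans hεk1
        haveI hKne : Nonempty K := ⟨⟨u + (c' - ck), hwK⟩⟩
        haveI := hKclosed.completeSpace_coe
        set Kq : NNReal := ⟨Q, hQ0⟩ with hKqdef
        have hKqQ : (Kq : ℝ) = Q := rfl
        have hKq1 : Kq < 1 := by
          have h1 : (Kq : ℝ) < ((1 : NNReal) : ℝ) := by
            rw [NNReal.coe_one, hKqQ]; exact hQ1
          exact_mod_cast h1
        set Φ : K → K := fun y => ⟨stopAt a b τ' (F y.1 lam), hΦmem y.1 y.2⟩ with hΦdef
        have hΦlip : LipschitzWith Kq Φ := LipschitzWith.of_dist_le_mul fun y₁ y₂ => by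
          rw [Subtype.dist_eq, Subtype.dist_eq, dist_eq_norm, dist_eq_norm, hKqQ]
          have hval : (Φ y₁ : C(Set.Icc a b, E)) - (Φ y₂ : C(Set.Icc a b, E))
              = stopAt a b τ' (F y₁.1 lam - F y₂.1 lam) := stopAt_sub _ _ _
          rw [hval]
          have hagree12 : 1 ≤ k → ∀ t : Set.Icc a b, (t : ℝ) ≤ (τk : ℝ) → y₁.1 t = y₂.1 t := by
            intro hk1 t ht
            rw [y₁.2.2.1 hk1 t ht, y₂.2.2.1 hk1 t ht]
          have hn1 : ‖(y₁ : C(Set.Icc a b, E))‖ ≤ r := by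
            have h := y₁.2.2.2
            have h1 : ‖(y₁ : C(Set.Icc a b, E))‖ ≤ ‖(y₁ : C(Set.Icc a b, E)) - c'‖ + ‖c'‖ := by
              simpa using norm_add_le ((y₁ : C(Set.Icc a b, E)) - c') c'
            rw [hrdef]; linarith
          have hn2 : ‖(y₂ : C(Set.Icc a b, E))‖ ≤ r := by
            have h := y₂.2.2.2
            have h1 : ‖(y₂ : C(Set.Icc a b, E))‖ ≤ ‖(y₂ : C(Set.Icc a b, E)) - c'‖ + ‖c'‖ := by
              simpa using norm_add_le ((y₂ : C(Set.Icc a b, E)) - c') c'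
            rw [hrdef]; linarith
          have hstep := contr_est lam hlamU k hk y₁.1 y₂.1 hn1 hn2 hagree12
          rw [← hsdef] at hstep
          calc ‖stopAt a b τ' (F y₁.1 lam - F y₂.1 lam)‖
              ≤ partNorm a b s (F y₁.1 lam - F y₂.1 lam) := norm_stopAt_le (le_of_eq hτ'val) _
            _ ≤ Q * partNorm a b s (y₁.1 - y₂.1) := hstep
            _ ≤ Q * ‖y₁.1 - y₂.1‖ :=
                mul_le_mul_of_nonneg_left (partNorm_le_norm _ _ _ _) hQ0
        have hcontr : ContractingWith Kq Φ := ⟨hKq1, hΦlip⟩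
        set u' : K := ContractingWith.fixedPoint Φ hcontr with hu'def
        have hufix' : stopAt a b τ' (F (u' : C(Set.Icc a b, E)) lam) = (u' : C(Set.Icc a b, E)) :=
          congrArg Subtype.val hcontr.fixedPoint_isFixedPt
        refine ⟨(u' : C(Set.Icc a b, E)), u'.2.1, ?_, ?_⟩
        · intro _ t ht
          conv_rhs => rw [← hufix']
          exact (stopAt_apply_of_le _ ht).symm
        · have h := est (u' : C(Set.Icc a b, E)) u'.2.2.1 u'.2.2.2
          rw [hufix'] at h
          have hQle : Q * ‖u - ck‖ ≤ ‖u - ck‖ := by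
            nlinarith [norm_nonneg (u - ck)]
          nlinarith [hη1, hεkε, ht₀a, norm_nonneg ((u' : C(Set.Icc a b, E)) - c'),
            mul_le_mul_of_nonneg_left (norm_nonneg ((u' : C(Set.Icc a b, E)) - c')) hQ0]
      · -- degenerate step: the interval is already exhausted
        push_neg at hk
        filter_upwards [ih ε hε] with lam hih
        obtain ⟨hlamU, u, hustop, hufix, huη⟩ := hih
        have hk1 : 1 ≤ k := by
          by_contra h
          have hk0 : k = 0 := by omega
          rw [hk0] at hk
          push_cast at hk
          linarith
        have hττ : ((τ (k+1) : Set.Icc a b) : ℝ) = ((τ k : Set.Icc a b) : ℝ) := by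
          rw [hτval, hτval, min_eq_right hk, min_eq_right (by push_cast; nlinarith [hδpos.le])]
        have hττ' : τ (k+1) = τ k := Subtype.ext hττ
        refine ⟨hlamU, u, by rw [hττ']; exact hustop, ?_, by rw [hττ']; exact huη⟩
        intro _ t ht
        exact hufix hk1 t (le_min (t.2.2.trans hk) t.2.2)
  -- existence of nearby fixed points, eventually
  have key : ∀ ε > (0:ℝ), ∀ᶠ lam in 𝓝 lam₀, lam ∈ U₀ ∧
      ∃ u : C(Set.Icc a b, E), F u lam = u ∧ ‖u - y₀‖ ≤ ε := by
    intro ε hε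
    set N : ℕ := ⌈(b - a) / δ⌉₊ with hN
    have hN1 : 1 ≤ N := by
      have := Nat.ceil_pos.mpr (div_pos (by linarith : (0:ℝ) < b - a) hδpos)
      omega
    have hbN : b ≤ a + (N : ℝ) * δ := by
      have h1 := Nat.le_ceil ((b - a) / δ)
      rw [div_le_iff₀ hδpos] at h1
      rw [hN]
      linarith
    filter_upwards [Pmain N ε hε] with lam hlam
    obtain ⟨hlamU, u, hustop, hufix, hub⟩ := hlam
    have hstopN : stopAt a b (τ N) y₀ = y₀ := by
      ext t
      exact stopAt_apply_of_le y₀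
        (show (t : ℝ) ≤ min (a + (N : ℝ) * δ) b from le_min (t.2.2.trans hbN) t.2.2)
    refine ⟨hlamU, u, ?_, by rwa [hstopN] at hub⟩
    ext t
    exact hufix hN1 t
      (show (t : ℝ) ≤ min (a + (N : ℝ) * δ) b from le_min (t.2.2.trans hbN) t.2.2)
  -- assemble the answer
  set P : Λ → Prop := fun lam => lam ∈ U₀ ∧
    ∃ u : C(Set.Icc a b, E), F u lam = u ∧ ‖u - y₀‖ ≤ 1 with hPdef
  have hUmem : {lam | P lam} ∈ 𝓝 lam₀ := key 1 one_pos
  set sol : Λ → C(Set.Icc a b, E) := fun lam =>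
    if h : P lam then h.2.choose else y₀ with hsoldef
  have hsolspec : ∀ lam, P lam → F (sol lam) lam = sol lam ∧ ‖sol lam - y₀‖ ≤ 1 := by
    intro lam h
    have h1 : sol lam = h.2.choose := by rw [hsoldef]; exact dif_pos h
    rw [h1]
    exact ⟨h.2.choose_spec.1, h.2.choose_spec.2⟩
  refine ⟨{lam | P lam}, hUmem, sol, fun lam hlam => (hsolspec lam hlam).1, ?_⟩
  rw [Metric.tendsto_nhds]
  intro ε hε
  have hε2 : 0 < min (ε/2) 1 := lt_min (by linarith) one_pos
  filter_upwards [key (min (ε/2) 1) hε2] with lam hlam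
  obtain ⟨hlamU, u, huf, hub⟩ := hlam
  have hPlam : P lam := ⟨hlamU, u, huf, hub.trans (min_le_right _ _)⟩
  obtain ⟨hsf, hsb⟩ := hsolspec lam hPlam
  have hnorm_sol : ‖sol lam‖ ≤ r := by
    have h1 : ‖sol lam‖ ≤ ‖sol lam - y₀‖ + ‖y₀‖ := by
      simpa using norm_add_le (sol lam - y₀) y₀
    rw [hrdef]; linarith
  have hnorm_u : ‖u‖ ≤ r := by
    have h1 : ‖u - y₀‖ ≤ 1 := hub.trans (min_le_right _ _)
    have h2 : ‖u‖ ≤ ‖u - y₀‖ + ‖y₀‖ := by simpa using norm_add_le (u - y₀) y₀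
    rw [hrdef]; linarith
  have hequ : sol lam = u := uniq lam hlamU _ _ hsf huf hnorm_sol hnorm_u
  rw [Real.dist_0_eq_abs, abs_of_nonneg (norm_nonneg _), hequ]
  exact lt_of_le_of_lt (hub.trans (min_le_left _ _)) (by linarith)
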